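/- Let D be a digraph on n ≥ 3 vertices containing a directed path P := x₁x₂…x_m with 2 ≤ m ≤ n−1, and let x be a vertex not contained in this path. If d(x,P) ≥ m and both x x₁ ∉ A(D) and x_m x ∉ A(D), then there exists an index i with 1 ≤ i ≤ m−1 such that both x_i x and x x_{i+1} are arcs of D; that is, D contains the directed path x₁x₂…x_i x x_{i+1}…x_m of length m (x can be inserted into P). -/

import Mathlib

variable {V : Type*}

/-- Rotate an index of `Fin m` forward by `k` steps (indices mod `m`). -/
def finRot {m : ℕ} (i : Fin m) (k : ℕ) : Fin m :=
  ⟨(i.val + k) % m, Nat.mod_lt _ (Nat.lt_of_le_of_lt (Nat.zero_le i.val) i.isLt)⟩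

/-- `c : Fin k → V` is a directed cycle of length `k`: distinct vertices with an
arc from each vertex to the next one (cyclically). -/
def IsCycle (A : V → V → Prop) {k : ℕ} (c : Fin k → V) : Prop :=
  Function.Injective c ∧ ∀ i, A (c i) (c (finRot i 1))

/-- Out-degree of `x`. -/
def outDeg [Fintype V] (A : V → V → Prop) [DecidableRel A] (x : V) : ℕ :=
  (Finset.univ.filter fun y => A x y).card

/-- In-degree of `x`. -/
def inDeg [Fintype V] (A : V → V → Prop) [DecidableRel A] (x : V) : ℕ :=
  (Finset.univ.filter fun y => A y x).card

/-- Degree of `x`. -/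
def deg [Fintype V] (A : V → V → Prop) [DecidableRel A] (x : V) : ℕ :=
  outDeg A x + inDeg A x

/-- Out-degree of `x` into the set `S`. -/
def outDegOn (A : V → V → Prop) [DecidableRel A] (x : V) (S : Finset V) : ℕ :=
  (S.filter fun y => A x y).card

/-- In-degree of `x` from the set `S`. -/
def inDegOn (A : V → V → Prop) [DecidableRel A] (x : V) (S : Finset V) : ℕ :=
  (S.filter fun y => A y x).card

/-- Degree of `x` with respect to the set `S`. -/
def degOn (A : V → V → Prop) [DecidableRel A] (x : V) (S : Finset V) : ℕ :=
  outDegOn A x S + inDegOn A x S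

/-- The set of indices of the subpath of a cycle on `Fin m` that goes from
index `β` to index `α` (inclusive), following the orientation of the cycle. -/
def cycSeg {m : ℕ} (β α : Fin m) : Finset (Fin m) :=
  (Finset.range ((α.val + m - β.val) % m + 1)).image (finRot β)

/-!
If `x` cannot be inserted, then no arc slot `xᵢxᵢ₊₁` of the path carries both `xᵢx` and
`xxᵢ₊₁`. Charging an in-neighbour `xᵢ` and an out-neighbour `xᵢ₊₁` of `x` to the slot
`xᵢxᵢ₊₁` is possible because `xₘx` and `xx₁` are not arcs, so the `m - 1` slots receive
all of `d(x,P)` with at most one unit each, contradicting `d(x,P) ≥ m`.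
-/

open Finset

theorem Fin.card_filter_add_card_filter_le {k : ℕ} (P Q : Fin (k + 1) → Prop)
    [DecidablePred P] [DecidablePred Q] (hP : ¬ P (Fin.last k)) (hQ : ¬ Q 0)
    (hPQ : ∀ i : Fin k, P i.castSucc → ¬ Q i.succ) :
    #{i | P i} + #{i | Q i} ≤ k := by
  rw [card_filter, card_filter, Fin.sum_univ_castSucc, Fin.sum_univ_succ, if_neg hP,
    if_neg hQ, add_zero, zero_add, ← sum_add_distrib]
  calc ∑ i : Fin k, ((if P i.castSucc then 1 else 0) + if Q i.succ then 1 else 0)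
      ≤ ∑ _i : Fin k, 1 := by
        refine sum_le_sum fun i _ => ?_
        by_cases hi : P i.castSucc
        · simp [hi, hPQ i hi]
        · simpa [hi] using ite_le_one le_rfl zero_le_one
    _ = k := by simp

theorem degOn_image_le {ι : Type*} [DecidableEq V] (A : V → V → Prop) [DecidableRel A]
    (x : V) (s : Finset ι) (p : ι → V) :
    degOn A x (s.image p) ≤ #{i ∈ s | A x (p i)} + #{i ∈ s | A (p i) x} := by
  unfold degOn outDegOn inDegOn
  rw [filter_image, filter_image]
  exact add_le_add card_image_le card_image_le

/-- Lemma 2 (iii). If a digraph on `n ≥ 3` vertices contains a path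
`x₁x₂…x_m` (`2 ≤ m ≤ n-1`) and a vertex `x` off the path with `d(x,P) ≥ m`, and
moreover `x x₁ ∉ A(D)` and `x_m x ∉ A(D)`, then `x` can be inserted into the path. -/
theorem insertion_of_degree_ge
    [DecidableEq V] (A : V → V → Prop) [DecidableRel A]
    (m : ℕ) (hm2 : 2 ≤ m)
    (p : Fin m → V)
    (x : V)
    (hdeg : m ≤ degOn A x (Finset.image p Finset.univ))
    (hend₁ : ¬ A x (p ⟨0, by omega⟩)) (hend₂ : ¬ A (p ⟨m - 1, by omega⟩) x) :
    ∃ i j : Fin m, (j : ℕ) = (i : ℕ) + 1 ∧ A (p i) x ∧ A x (p j) := by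
  by_contra! hcon
  obtain ⟨k, rfl⟩ : ∃ k, m = k + 1 := ⟨m - 1, by omega⟩
  have hlast : (⟨k + 1 - 1, by omega⟩ : Fin (k + 1)) = Fin.last k := Fin.ext (by simp)
  have hslots := Fin.card_filter_add_card_filter_le (fun i => A (p i) x) (fun i => A x (p i))
    (hlast ▸ hend₂) hend₁ fun i => hcon i.castSucc i.succ rfl
  have hdeg_le := degOn_image_le A x univ p
  omega
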